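/- Let d be a positive natural number, ε > 0, Δf > 0, and set λ = Δf/ε. For all vectors a, b, x ∈ ℝ^d with ∑_{i=1}^d |a_i − b_i| ≤ Δf, the product densities of independent Laplace(λ) noise added coordinatewise satisfy ∏_{i=1}^d (1/(2λ))·exp(−|x_i − a_i|/λ) ≤ exp(ε) · ∏_{i=1}^d (1/(2λ))·exp(−|x_i − b_i|/λ). -/

import Mathlib

/-!
Shifting the centre of a Laplace(λ) density from `b` to `a` multiplies it by at most
`exp (|a - b| / λ)`, by the triangle inequality `|x - b| ≤ |x - a| + |a - b|`. For product
densities these factors multiply to `exp (‖a - b‖₁ / λ)`, which is at most `exp ε` once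
`‖a - b‖₁ ≤ Δf = ε λ`.
-/

open Real Finset

noncomputable def laplacePDF (lam c x : ℝ) : ℝ :=
  1 / (2 * lam) * exp (-|x - c| / lam)

lemma laplacePDF_nonneg {lam : ℝ} (hlam : 0 ≤ lam) (c x : ℝ) : 0 ≤ laplacePDF lam c x := by
  unfold laplacePDF
  positivity

lemma laplacePDF_le_exp_mul {lam : ℝ} (hlam : 0 < lam) (a b x : ℝ) :
    laplacePDF lam a x ≤ exp (|a - b| / lam) * laplacePDF lam b x := by
  unfold laplacePDF
  rw [mul_left_comm, ← exp_add, ← add_div]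
  gcongr
  linarith [abs_sub_le x a b]

lemma prod_laplacePDF_le_exp_mul {ι : Type*} (s : Finset ι) {lam : ℝ} (hlam : 0 < lam)
    (a b x : ι → ℝ) :
    ∏ i ∈ s, laplacePDF lam (a i) (x i)
      ≤ exp (∑ i ∈ s, |a i - b i| / lam) * ∏ i ∈ s, laplacePDF lam (b i) (x i) := by
  rw [exp_sum, ← prod_mul_distrib]
  exact prod_le_prod (fun i _ => laplacePDF_nonneg hlam.le _ _)
    (fun i _ => laplacePDF_le_exp_mul hlam _ _ _)

theorem laplace_mechanism_multidim_general (d : ℕ) (ε Δf : ℝ) (hε : 0 < ε)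
    (hΔf : 0 < Δf) (lam : ℝ) (hlam : lam = Δf / ε) (a b x : Fin d → ℝ)
    (hsens : ∑ i, |a i - b i| ≤ Δf) :
    ∏ i, (1 / (2 * lam)) * Real.exp (-|x i - a i| / lam)
      ≤ Real.exp ε * ∏ i, (1 / (2 * lam)) * Real.exp (-|x i - b i| / lam) := by
  have hlam0 : 0 < lam := hlam ▸ div_pos hΔf hε
  have hratio : ∑ i, |a i - b i| / lam ≤ ε := by
    rw [← sum_div, div_le_iff₀ hlam0, hlam, mul_div_cancel₀ _ hε.ne']
    exact hsens
  calc ∏ i, laplacePDF lam (a i) (x i)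
      ≤ exp (∑ i, |a i - b i| / lam) * ∏ i, laplacePDF lam (b i) (x i) :=
        prod_laplacePDF_le_exp_mul _ hlam0 a b x
    _ ≤ exp ε * ∏ i, laplacePDF lam (b i) (x i) := by
        gcongr
        exact prod_nonneg fun i _ => laplacePDF_nonneg hlam0.le _ _

/-- Multidimensional Laplace mechanism density bound: if ∑ᵢ |aᵢ − bᵢ| ≤ Δf and λ = Δf/ε,
then the product of the coordinatewise Laplace(λ) densities centered at `a` evaluated at `x`
is at most exp(ε) times the product of the densities centered at `b`. -/
theorem laplace_mechanism_multidim (d : ℕ) (hd : 0 < d) (ε Δf : ℝ) (hε : 0 < ε)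
    (hΔf : 0 < Δf) (lam : ℝ) (hlam : lam = Δf / ε) (a b x : Fin d → ℝ)
    (hsens : ∑ i, |a i - b i| ≤ Δf) :
    ∏ i, (1 / (2 * lam)) * Real.exp (-|x i - a i| / lam)
      ≤ Real.exp ε * ∏ i, (1 / (2 * lam)) * Real.exp (-|x i - b i| / lam) :=
  laplace_mechanism_multidim_general d ε Δf hε hΔf lam hlam a b x hsens
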